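/- The radius of convergence of the power series Σ_{n≥1} n^{n-1} x^n/n! equals 1/e, and the series converges at x = 1/e with sum equal to 1. -/

import Mathlib

/-!
The Abel polynomials `A n x = x (x + n) ^ (n - 1)` are of binomial type, so the series
`U a t = ∑ A n a tⁿ / n!` satisfy `U (a + b) = U a * U b` for `|t| < 1/e`. Writing
`U a = 1 + a F a`, where `F 0 = T` is the tree function, this gives
`U 1 = U (1/k) ^ k = (1 + F (1/k) / k) ^ k → exp T` as `k → ∞`; since also `T = t U 1`, we get
`T = t exp T`. By Stirling's formula the coefficients at `t = 1/e` are `O(n^(-3/2))`, so `T` is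
continuous up to `1/e` and `y = T(1/e)` solves `exp (y - 1) = y`, whose only solution is `y = 1`.
The ratio of consecutive coefficients tends to `e`, which gives the radius of convergence.
-/

open Nat Real Filter

open Topology

noncomputable def abelPoly (n : ℕ) (x : ℝ) : ℝ := if n = 0 then 1 else x * (x + n) ^ (n - 1)

@[simp] theorem abelPoly_zero (x : ℝ) : abelPoly 0 x = 1 := rfl

theorem abelPoly_succ (n : ℕ) (x : ℝ) : abelPoly (n + 1) x = x * (x + (n + 1)) ^ n := by
  simp [abelPoly]

theorem hasDerivAt_abelPoly_succ (n : ℕ) (x : ℝ) :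
    HasDerivAt (abelPoly (n + 1)) ((n + 1) * abelPoly n (x + 1)) x := by
  rw [show abelPoly (n + 1) = fun y : ℝ => y * (y + (n + 1)) ^ n from funext (abelPoly_succ n)]
  refine ((hasDerivAt_id' x).fun_mul
    (((hasDerivAt_id' x).add_const ((n : ℝ) + 1)).fun_pow n)).congr_deriv ?_
  rcases n with _ | m
  · simp
  · simp only [abelPoly_succ]; push_cast; ring

theorem sum_choose_mul_abelPoly (n : ℕ) (x y : ℝ) :
    ∑ k ∈ Finset.range (n + 1), (n.choose k : ℝ) * abelPoly k x * abelPoly (n - k) y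
      = abelPoly n (x + y) := by
  induction n generalizing x with
  | zero => simp
  | succ n ih =>
    simp_rw [Finset.sum_range_succ' _ (n + 1), Nat.add_sub_add_right, abelPoly_zero,
      Nat.choose_zero_right, Nat.sub_zero, Nat.cast_one, one_mul]
    have hL (x : ℝ) : HasDerivAt
        (fun x => ∑ k ∈ Finset.range (n + 1), ((n + 1).choose (k + 1) : ℝ) * abelPoly (k + 1) x *
          abelPoly (n - k) y + abelPoly (n + 1) y) ((n + 1) * abelPoly n (x + 1 + y)) x := by
      rw [← ih, Finset.mul_sum]
      apply HasDerivAt.add_const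
      refine HasDerivAt.fun_sum fun k _ => ?_
      refine (((hasDerivAt_abelPoly_succ k x).const_mul _).mul_const _).congr_deriv ?_
      have hchoose : ((n : ℝ) + 1) * n.choose k = (n + 1).choose (k + 1) * (k + 1) := by
        exact_mod_cast Nat.add_one_mul_choose_eq n k
      linear_combination -(abelPoly k (x + 1) * abelPoly (n - k) y) * hchoose
    have hR (x : ℝ) : HasDerivAt (fun x => abelPoly (n + 1) (x + y))
        ((n + 1) * abelPoly n (x + 1 + y)) x := by
      rw [add_right_comm]
      exact (hasDerivAt_abelPoly_succ n (x + y)).comp_add_const x y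
    refine isOpen_univ.eqOn_of_deriv_eq isPreconnected_univ
      (fun x _ => (hL x).differentiableAt.differentiableWithinAt)
      (fun x _ => (hR x).differentiableAt.differentiableWithinAt)
      (fun x _ => (hL x).deriv.trans (hR x).deriv.symm) (Set.mem_univ 0) ?_ (Set.mem_univ x)
    simp [abelPoly_succ]

theorem abelPoly_nonneg {x : ℝ} (hx : 0 ≤ x) (n : ℕ) : 0 ≤ abelPoly n x := by
  rcases n with _ | n
  · simp
  · rw [abelPoly_succ]; positivity

theorem add_pow_div_factorial_le {a : ℝ} (ha : 0 ≤ a) (n : ℕ) :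
    (a + n) ^ n / n ! ≤ exp a * exp 1 ^ n := by
  rw [← exp_nat_mul, mul_one, ← exp_add]
  exact pow_div_factorial_le_exp _ (by positivity) n

theorem abelPoly_div_factorial_le {a : ℝ} (ha : 0 ≤ a) (n : ℕ) :
    abelPoly n a / n ! ≤ exp a * exp 1 ^ n := by
  refine le_trans ?_ (add_pow_div_factorial_le ha n)
  gcongr
  rcases n with _ | n
  · simp
  · rw [abelPoly_succ, _root_.pow_succ', Nat.cast_succ]
    gcongr
    linarith

/-- `∑ treeCoeff a n * tⁿ = (exp (a T(t)) - 1) / a`, where `T = ∑ treeCoeff 0 n * tⁿ` is the tree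
function. -/
noncomputable def treeCoeff (a : ℝ) (n : ℕ) : ℝ := if n = 0 then 0 else (a + n) ^ (n - 1) / n !

theorem treeCoeff_nonneg {a : ℝ} (ha : 0 ≤ a) (n : ℕ) : 0 ≤ treeCoeff a n := by
  unfold treeCoeff; split_ifs <;> positivity

theorem treeCoeff_le {a : ℝ} (ha : 0 ≤ a) (n : ℕ) : treeCoeff a n ≤ exp a * exp 1 ^ n := by
  refine le_trans ?_ (add_pow_div_factorial_le ha n)
  rcases n with _ | n
  · simp [treeCoeff]
  · simp only [treeCoeff, Nat.add_one_ne_zero, if_false, Nat.add_sub_cancel]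
    gcongr
    · push_cast; linarith
    · omega

theorem abelPoly_succ_div_factorial (a : ℝ) (n : ℕ) :
    abelPoly (n + 1) a / (n + 1) ! = a * treeCoeff a (n + 1) := by
  simp [abelPoly_succ, treeCoeff, mul_div_assoc]

theorem treeCoeff_zero_succ (n : ℕ) : treeCoeff 0 (n + 1) = abelPoly n 1 / n ! := by
  rcases n with _ | n
  · simp [treeCoeff]
  · simp only [treeCoeff, abelPoly_succ, Nat.add_one_ne_zero, if_false, Nat.add_sub_cancel,
      Nat.factorial_succ (n + 1)]
    push_cast
    field_simp
    ring

theorem summable_norm_mul_pow_of_abs_le {c : ℕ → ℝ} {C R t : ℝ} (hc : ∀ n, |c n| ≤ C * R ^ n)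
    (ht : |R * t| < 1) : Summable fun n => ‖c n * t ^ n‖ := by
  have hgeom : Summable fun n => C * (R * |t|) ^ n :=
    (summable_geometric_of_abs_lt_one (by rwa [abs_mul, abs_abs, ← abs_mul])).mul_left C
  refine hgeom.of_nonneg_of_le (fun n => norm_nonneg _) fun n => ?_
  rw [norm_mul, norm_pow, Real.norm_eq_abs, Real.norm_eq_abs, mul_pow, ← mul_assoc]
  gcongr
  exact hc n

theorem abs_exp_one_mul_lt_one {t : ℝ} (ht : |t| < (exp 1)⁻¹) : |exp 1 * t| < 1 := by
  calc |exp 1 * t| = exp 1 * |t| := by rw [abs_mul, abs_of_pos (exp_pos 1)]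
    _ < exp 1 * (exp 1)⁻¹ := by gcongr
    _ = 1 := mul_inv_cancel₀ (exp_pos 1).ne'

theorem sum_range_div_factorial_mul_pow (p q : ℕ → ℝ) (t : ℝ) (n : ℕ) :
    ∑ k ∈ Finset.range (n + 1), p k / k ! * t ^ k * (q (n - k) / (n - k) ! * t ^ (n - k))
      = (∑ k ∈ Finset.range (n + 1), (n.choose k : ℝ) * p k * q (n - k)) / n ! * t ^ n := by
  rw [Finset.sum_div, Finset.sum_mul]
  refine Finset.sum_congr rfl fun k hk => ?_
  have hkn : k ≤ n := Nat.lt_succ_iff.mp (Finset.mem_range.mp hk)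
  rw [Nat.cast_choose ℝ hkn, ← pow_mul_pow_sub t hkn]
  field_simp

noncomputable def abelSeries (a t : ℝ) : ℝ := ∑' n, abelPoly n a / n ! * t ^ n

noncomputable def treeSeries (a t : ℝ) : ℝ := ∑' n, treeCoeff a n * t ^ n

section

variable {a t : ℝ}

theorem summable_norm_abelSeries (ha : 0 ≤ a) (ht : |t| < (exp 1)⁻¹) :
    Summable fun n => ‖abelPoly n a / n ! * t ^ n‖ := by
  refine summable_norm_mul_pow_of_abs_le (C := exp a) (fun n => ?_) (abs_exp_one_mul_lt_one ht)
  rw [abs_of_nonneg (div_nonneg (abelPoly_nonneg ha n) (Nat.cast_nonneg _))]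
  exact abelPoly_div_factorial_le ha n

theorem summable_norm_treeSeries (ha : 0 ≤ a) (ht : |t| < (exp 1)⁻¹) :
    Summable fun n => ‖treeCoeff a n * t ^ n‖ := by
  refine summable_norm_mul_pow_of_abs_le (C := exp a) (fun n => ?_) (abs_exp_one_mul_lt_one ht)
  rw [abs_of_nonneg (treeCoeff_nonneg ha n)]
  exact treeCoeff_le ha n

theorem abelSeries_eq_one_add_mul (ha : 0 ≤ a) (ht : |t| < (exp 1)⁻¹) :
    abelSeries a t = 1 + a * treeSeries a t := by
  rw [abelSeries, treeSeries, (summable_norm_abelSeries ha ht).of_norm.tsum_eq_zero_add,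
    (summable_norm_treeSeries ha ht).of_norm.tsum_eq_zero_add]
  simp only [abelPoly_succ_div_factorial, mul_assoc, tsum_mul_left]
  simp [treeCoeff]

theorem abelSeries_add {b : ℝ} (ha : 0 ≤ a) (hb : 0 ≤ b) (ht : |t| < (exp 1)⁻¹) :
    abelSeries (a + b) t = abelSeries a t * abelSeries b t := by
  rw [abelSeries, abelSeries, abelSeries, tsum_mul_tsum_eq_tsum_sum_range_of_summable_norm
    (summable_norm_abelSeries ha ht) (summable_norm_abelSeries hb ht)]
  simp_rw [sum_range_div_factorial_mul_pow (abelPoly · a) (abelPoly · b), sum_choose_mul_abelPoly]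

theorem abelSeries_nat_mul (ha : 0 ≤ a) (ht : |t| < (exp 1)⁻¹) (k : ℕ) :
    abelSeries (k * a) t = abelSeries a t ^ k := by
  induction k with
  | zero => simp [abelSeries_eq_one_add_mul le_rfl ht]
  | succ k ih =>
    rw [Nat.cast_succ, _root_.add_one_mul, abelSeries_add (by positivity) ha ht, ih, pow_succ]

theorem continuousOn_treeSeries_left (ht : |t| < (exp 1)⁻¹) :
    ContinuousOn (fun a => treeSeries a t) (Set.Icc 0 1) := by
  have hbound : Summable fun n => ‖exp 1 * exp 1 ^ n * t ^ n‖ :=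
    summable_norm_mul_pow_of_abs_le (fun n => (abs_of_pos (by positivity)).le)
      (abs_exp_one_mul_lt_one ht)
  refine continuousOn_tsum (fun n => ?_) hbound fun n a ha => ?_
  · unfold treeCoeff; split_ifs <;> fun_prop
  · rw [norm_mul, norm_mul _ (t ^ n), Real.norm_of_nonneg (treeCoeff_nonneg ha.1 n),
      Real.norm_of_nonneg (by positivity : 0 ≤ exp 1 * exp 1 ^ n)]
    refine mul_le_mul_of_nonneg_right ((treeCoeff_le ha.1 n).trans ?_) (norm_nonneg _)
    gcongr
    exact ha.2

theorem abelSeries_one_eq_exp (ht : |t| < (exp 1)⁻¹) : abelSeries 1 t = exp (treeSeries 0 t) := by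
  have hinv : Tendsto (fun k : ℕ => (k : ℝ)⁻¹) atTop (𝓝[Set.Icc 0 1] 0) :=
    tendsto_nhdsWithin_iff.2 ⟨tendsto_inv_atTop_zero.comp tendsto_natCast_atTop_atTop,
      (eventually_ge_atTop 1).mono fun k hk =>
        ⟨by positivity, inv_le_one_of_one_le₀ (by exact_mod_cast hk)⟩⟩
  have hlim : Tendsto (fun k : ℕ => (k : ℝ) * ((k : ℝ)⁻¹ * treeSeries (k : ℝ)⁻¹ t)) atTop
      (𝓝 (treeSeries 0 t)) := by
    refine ((continuousOn_treeSeries_left ht 0 ⟨le_rfl, zero_le_one⟩).tendsto.comp hinv).congr' ?_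
    filter_upwards [eventually_ne_atTop 0] with k hk
    simp [hk]
  refine tendsto_nhds_unique (tendsto_const_nhds.congr' ?_)
    (tendsto_one_add_pow_exp_of_tendsto hlim)
  filter_upwards [eventually_ne_atTop 0] with k hk
  rw [← abelSeries_eq_one_add_mul (by positivity) ht, ← abelSeries_nat_mul (by positivity) ht,
    mul_inv_cancel₀ (by exact_mod_cast hk)]

theorem treeSeries_zero_eq_mul_abelSeries_one (ht : |t| < (exp 1)⁻¹) :
    treeSeries 0 t = t * abelSeries 1 t := by
  rw [treeSeries, (summable_norm_treeSeries le_rfl ht).of_norm.tsum_eq_zero_add, abelSeries,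
    ← tsum_mul_left]
  simp only [treeCoeff_zero_succ]
  simp only [treeCoeff, if_true, zero_mul, zero_add]
  exact tsum_congr fun n => by ring

theorem treeSeries_zero_eq_mul_exp (ht : |t| < (exp 1)⁻¹) :
    treeSeries 0 t = t * exp (treeSeries 0 t) := by
  conv_lhs => rw [treeSeries_zero_eq_mul_abelSeries_one ht, abelSeries_one_eq_exp ht]

end

theorem treeCoeff_zero_mul_inv_exp_pow_le {n : ℕ} (hn : n ≠ 0) :
    treeCoeff 0 n * (exp 1)⁻¹ ^ n ≤ ((n : ℝ) ^ (3 / 2 : ℝ))⁻¹ := by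
  have hn0 : (0 : ℝ) < n := by positivity
  have hrpow : (n : ℝ) ^ (3 / 2 : ℝ) = n * √n := by
    rw [show (3 / 2 : ℝ) = 1 + 1 / 2 by norm_num, rpow_add hn0, rpow_one, sqrt_eq_rpow]
  have hpow : (n : ℝ) * n ^ (n - 1) = n ^ n := by
    rw [← _root_.pow_succ', Nat.sub_add_cancel (Nat.one_le_iff_ne_zero.2 hn)]
  simp only [treeCoeff, hn, if_false, zero_add]
  rw [div_mul_eq_mul_div, div_le_iff₀ (by positivity), inv_mul_eq_div, le_div_iff₀ (by positivity)]
  calc (n : ℝ) ^ (n - 1) * (exp 1)⁻¹ ^ n * n ^ (3 / 2 : ℝ) = √n * (n / exp 1) ^ n := by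
        rw [hrpow, div_pow, ← hpow, inv_pow]; ring
    _ ≤ √(2 * π * n) * (n / exp 1) ^ n := by
        gcongr
        nlinarith [pi_gt_three]
    _ ≤ n ! := Stirling.le_factorial_stirling n

theorem summable_treeCoeff_zero_mul_inv_exp_pow :
    Summable fun n => treeCoeff 0 n * (exp 1)⁻¹ ^ n := by
  refine (summable_nat_rpow_inv.2 (by norm_num : (1 : ℝ) < 3 / 2)).of_nonneg_of_le
    (fun n => mul_nonneg (treeCoeff_nonneg le_rfl n) (by positivity)) fun n => ?_
  rcases eq_or_ne n 0 with rfl | hn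
  · simp [treeCoeff]
  · exact treeCoeff_zero_mul_inv_exp_pow_le hn

theorem continuousOn_treeSeries_zero : ContinuousOn (treeSeries 0) (Set.Icc 0 (exp 1)⁻¹) := by
  refine continuousOn_tsum (fun n => by fun_prop) summable_treeCoeff_zero_mul_inv_exp_pow
    fun n t ht => ?_
  rw [norm_mul, norm_pow, Real.norm_of_nonneg (treeCoeff_nonneg le_rfl n),
    Real.norm_of_nonneg ht.1]
  exact mul_le_mul_of_nonneg_left (pow_le_pow_left₀ ht.1 ht.2 n) (treeCoeff_nonneg le_rfl n)

theorem treeSeries_zero_inv_exp : treeSeries 0 (exp 1)⁻¹ = 1 := by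
  have hc : 0 < (exp 1)⁻¹ := inv_pos.2 (exp_pos 1)
  have hfix : treeSeries 0 (exp 1)⁻¹ = (exp 1)⁻¹ * exp (treeSeries 0 (exp 1)⁻¹) := by
    refine Set.EqOn.of_subset_closure (s := Set.Ico 0 (exp 1)⁻¹)
      (fun t ht => treeSeries_zero_eq_mul_exp (by rw [abs_of_nonneg ht.1]; exact ht.2))
      continuousOn_treeSeries_zero
      (continuousOn_id.mul (continuous_exp.comp_continuousOn continuousOn_treeSeries_zero))
      Set.Ico_subset_Icc_self (closure_Ico hc.ne).ge ⟨hc.le, le_rfl⟩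
  set y := treeSeries 0 (exp 1)⁻¹
  have hexp : exp (y - 1) = y := by rw [exp_sub, div_eq_inv_mul, ← hfix]
  by_contra hy
  linarith [add_one_lt_exp (sub_ne_zero.2 hy)]

theorem treeCoeff_zero_succ_succ_div (n : ℕ) :
    treeCoeff 0 (n + 1 + 1) / treeCoeff 0 (n + 1) = (1 + 1 / ((n : ℝ) + 1)) ^ n := by
  rw [show 1 + 1 / ((n : ℝ) + 1) = (n + 2) / (n + 1) by field_simp; ring, div_pow]
  simp only [treeCoeff, Nat.add_one_ne_zero, if_false, zero_add, Nat.add_sub_cancel,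
    Nat.factorial_succ (n + 1)]
  push_cast
  field_simp
  ring

theorem tendsto_treeCoeff_zero_succ_div :
    Tendsto (fun n => treeCoeff 0 (n + 1) / treeCoeff 0 n) atTop (𝓝 (exp 1)) := by
  rw [← tendsto_add_atTop_iff_nat 1]
  simp_rw [treeCoeff_zero_succ_succ_div]
  have hpow := (tendsto_one_add_div_pow_exp 1).comp (tendsto_add_atTop_nat 1)
  have hbase := (tendsto_one_div_add_atTop_nhds_zero_nat (𝕜 := ℝ)).const_add 1
  rw [add_zero] at hbase
  refine (div_one (exp 1) ▸ hpow.div hbase one_ne_zero).congr fun n => ?_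
  simp only [Pi.div_apply, Function.comp_apply, Nat.cast_succ]
  rw [_root_.pow_succ, mul_div_cancel_right₀ _ (by positivity)]

theorem not_summable_treeCoeff_zero_mul_pow {x : ℝ} (hx : (exp 1)⁻¹ < |x|) :
    ¬ Summable fun n => treeCoeff 0 n * x ^ n := by
  have hl : 1 < exp 1 * |x| := by
    calc 1 = exp 1 * (exp 1)⁻¹ := (mul_inv_cancel₀ (exp_pos 1).ne').symm
      _ < exp 1 * |x| := by gcongr
  have hx0 : |x| ≠ 0 := ((inv_pos.2 (exp_pos 1)).trans hx).ne'
  refine not_summable_of_ratio_test_tendsto_gt_one hl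
    ((tendsto_treeCoeff_zero_succ_div.mul_const |x|).congr' ?_)
  filter_upwards [eventually_ne_atTop 0] with n hn
  have hpos : 0 < treeCoeff 0 n := by simp only [treeCoeff, hn, if_false]; positivity
  rw [norm_mul, norm_mul, norm_pow, norm_pow, Real.norm_of_nonneg (treeCoeff_nonneg le_rfl _),
    Real.norm_of_nonneg hpos.le, Real.norm_eq_abs, _root_.pow_succ]
  field_simp

/-- The radius of convergence of `∑_{n≥1} n^(n-1) x^n / n!` equals `1/e`, and the series
converges at `x = 1/e` with sum `1`. -/
theorem stmt_5 :
    (∀ x : ℝ, |x| < (Real.exp 1)⁻¹ →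
      Summable fun n : ℕ => if n = 0 then (0 : ℝ) else (n : ℝ) ^ (n - 1) * x ^ n / n !) ∧
    (∀ x : ℝ, (Real.exp 1)⁻¹ < |x| →
      ¬ Summable fun n : ℕ => if n = 0 then (0 : ℝ) else (n : ℝ) ^ (n - 1) * x ^ n / n !) ∧
    HasSum (fun n : ℕ =>
      if n = 0 then (0 : ℝ) else (n : ℝ) ^ (n - 1) * ((Real.exp 1)⁻¹) ^ n / n !) 1 := by
  have hterm (x : ℝ) : (fun n : ℕ => if n = 0 then (0 : ℝ) else (n : ℝ) ^ (n - 1) * x ^ n / n !)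
      = fun n => treeCoeff 0 n * x ^ n := by
    funext n
    unfold treeCoeff
    split_ifs <;> simp [div_mul_eq_mul_div]
  simp only [hterm]
  refine ⟨fun x hx => (summable_norm_treeSeries le_rfl hx).of_norm,
    fun x hx => not_summable_treeCoeff_zero_mul_pow hx, ?_⟩
  have h := summable_treeCoeff_zero_mul_inv_exp_pow.hasSum
  rwa [← treeSeries, treeSeries_zero_inv_exp] at h
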